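/- For every probability measure μ on E_Δ, the filtration (M^μ_t)_{t≥0} is right continuous, i.e. M^μ_t = ∩_{s>t} M^μ_s for all t ≥ 0; consequently the filtration (M_t)_{t≥0} is right continuous, i.e. M_t = ∩_{s>t} M_s for all t ≥ 0. -/

import Mathlib

open MeasureTheory Set Filter
open scoped NNReal ENNReal

noncomputable section

variable {S : Type*} [MeasurableSpace S] {Ω : Type*}

/-- The natural filtration `F⁰_t = σ(X_s : s ∈ [0,t])` of the process `X`. -/
def F0 (X : ℝ≥0 → Ω → S) (t : ℝ≥0) : MeasurableSpace Ω :=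
  ⨆ s ∈ Set.Iic t, MeasurableSpace.comap (X s) inferInstance

/-- `F⁰_∞ = σ(X_s : s ≥ 0)`. -/
def F0inf (X : ℝ≥0 → Ω → S) : MeasurableSpace Ω :=
  ⨆ s : ℝ≥0, MeasurableSpace.comap (X s) inferInstance

/-- `F⁰_{t+} = ⋂_{s > t} F⁰_s`. -/
def F0plus (X : ℝ≥0 → Ω → S) (t : ℝ≥0) : MeasurableSpace Ω :=
  ⨅ s ∈ Set.Ioi t, F0 X s

/-- The life time `ζ(ω) = inf {t ≥ 0 : X_t(ω) = Δ}` (with value `∞` if the path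
never reaches the cemetery `Δ`). -/
def lifetime (Δ : S) (X : ℝ≥0 → Ω → S) (ω : Ω) : ℝ≥0∞ :=
  ⨅ (t : ℝ≥0) (_ : X t ω = Δ), (t : ℝ≥0∞)

variable (Δ : S)

/-- `Q̄_{x,t}[f ; t < ζ] := h(x)·E^h_x[e^{αt}·f/h(X_t) ; t < ζ]`, the σ-finite
distribution up to time `t` applied to a nonnegative integrand `f`. -/
def Qbar (α : ℝ) (h : S → ℝ≥0∞) (X : ℝ≥0 → Ω → S)
    (P : S → @Measure Ω (F0inf X)) (x : S) (t : ℝ≥0) (f : Ω → ℝ≥0∞) : ℝ≥0∞ :=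
  h x * ∫⁻ ω in {ω | (t : ℝ≥0∞) < lifetime Δ X ω},
      ENNReal.ofReal (Real.exp (α * (t : ℝ))) * f ω * (h (X t ω))⁻¹ ∂(P x)

/-- `Q̄_{x,t}(Λ ; t < ζ)` of a set `Λ`. -/
def QbarSet (α : ℝ) (h : S → ℝ≥0∞) (X : ℝ≥0 → Ω → S)
    (P : S → @Measure Ω (F0inf X)) (x : S) (t : ℝ≥0) (Λ : Set Ω) : ℝ≥0∞ :=
  Qbar Δ α h X P x t (Λ.indicator 1)

/-- `Q̄_{μ,t}(Λ ; t < ζ) = ∫ Q̄_{x,t}(Λ ; t < ζ) μ(dx)` (note `Q̄_{Δ,t} = 0`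
automatically since `h Δ = 0`). -/
def Qmu (α : ℝ) (h : S → ℝ≥0∞) (X : ℝ≥0 → Ω → S)
    (P : S → @Measure Ω (F0inf X)) (μ : Measure S) (t : ℝ≥0) (Λ : Set Ω) : ℝ≥0∞ :=
  ∫⁻ x, QbarSet Δ α h X P x t Λ ∂μ

/-- `P^h_μ(Λ) = ∫ P^h_x(Λ) μ(dx)`. -/
def Pmu (X : ℝ≥0 → Ω → S) (P : S → @Measure Ω (F0inf X)) (μ : Measure S)
    (Λ : Set Ω) : ℝ≥0∞ :=
  ∫⁻ x, P x Λ ∂μ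

/-- `P^h_μ(Λ ; t < ζ)`. -/
def PmuT (X : ℝ≥0 → Ω → S) (P : S → @Measure Ω (F0inf X)) (μ : Measure S)
    (t : ℝ≥0) (Λ : Set Ω) : ℝ≥0∞ :=
  ∫⁻ x, P x (Λ ∩ {ω | (t : ℝ≥0∞) < lifetime Δ X ω}) ∂μ

/-- The augmented σ-field `M^μ_t`. -/
def Mmu (α : ℝ) (h : S → ℝ≥0∞) (X : ℝ≥0 → Ω → S)
    (P : S → @Measure Ω (F0inf X)) (μ : Measure S) (t : ℝ≥0) : Set (Set Ω) :=
  {Λ | ∃ Λ' Γ : Set Ω, MeasurableSet[F0 X t] Λ' ∧ MeasurableSet[F0plus X t] Γ ∧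
      symmDiff Λ Λ' ⊆ Γ ∧ ∀ T : ℝ≥0, t < T → Qmu Δ α h X P μ T Γ = 0}

/-- The auxiliary family `G^{μ,1}_t`. -/
def Gmu1 (α : ℝ) (h : S → ℝ≥0∞) (X : ℝ≥0 → Ω → S)
    (P : S → @Measure Ω (F0inf X)) (μ : Measure S) (t : ℝ≥0) : Set (Set Ω) :=
  {Λ | ∃ Λ' Γ : Set Ω, MeasurableSet[F0 X t] Λ' ∧ MeasurableSet[F0plus X t] Γ ∧
      symmDiff Λ Λ' ⊆ Γ ∧ PmuT Δ X P μ t Γ = 0}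

/-- The auxiliary family `G^{μ,2}_t`. -/
def Gmu2 (α : ℝ) (h : S → ℝ≥0∞) (X : ℝ≥0 → Ω → S)
    (P : S → @Measure Ω (F0inf X)) (μ : Measure S) (t : ℝ≥0) : Set (Set Ω) :=
  {Λ | ∃ Λ' Γ : Set Ω, MeasurableSet[F0plus X t] Λ' ∧ MeasurableSet[F0plus X t] Γ ∧
      symmDiff Λ Λ' ⊆ Γ ∧ PmuT Δ X P μ t Γ = 0}

/-- The `P^h_μ`-augmentation `F^{h,μ}_t` of `F⁰_t` in `F⁰_∞`. -/
def Fhmu (X : ℝ≥0 → Ω → S) (P : S → @Measure Ω (F0inf X)) (μ : Measure S)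
    (t : ℝ≥0) : Set (Set Ω) :=
  {Λ | ∃ Λ' Γ : Set Ω, MeasurableSet[F0 X t] Λ' ∧ MeasurableSet[F0inf X] Γ ∧
      symmDiff Λ Λ' ⊆ Γ ∧ Pmu X P μ Γ = 0}

/-- `M_t = ⋂_μ M^μ_t`, the intersection over all probability measures `μ` on `E_Δ`. -/
def Mt (α : ℝ) (h : S → ℝ≥0∞) (X : ℝ≥0 → Ω → S)
    (P : S → @Measure Ω (F0inf X)) (t : ℝ≥0) : Set (Set Ω) :=
  {Λ | ∀ μ : Measure S, IsProbabilityMeasure μ → Λ ∈ Mmu Δ α h X P μ t}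

/-- `M_∞ = σ(⋃_t M_t)`. -/
def Minf (α : ℝ) (h : S → ℝ≥0∞) (X : ℝ≥0 → Ω → S)
    (P : S → @Measure Ω (F0inf X)) : MeasurableSpace Ω :=
  MeasurableSpace.generateFrom {Λ | ∃ t : ℝ≥0, Λ ∈ Mt Δ α h X P t}

/-- `M^μ_∞ = σ(⋃_t M^μ_t)`. -/
def Mmuinf (α : ℝ) (h : S → ℝ≥0∞) (X : ℝ≥0 → Ω → S)
    (P : S → @Measure Ω (F0inf X)) (μ : Measure S) : MeasurableSpace Ω :=
  MeasurableSpace.generateFrom {Λ | ∃ t : ℝ≥0, Λ ∈ Mmu Δ α h X P μ t}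

/-- `M_σ` for an `(M_t)`-stopping time `σ`. -/
def Msigma (α : ℝ) (h : S → ℝ≥0∞) (X : ℝ≥0 → Ω → S)
    (P : S → @Measure Ω (F0inf X)) (σ : Ω → ℝ≥0∞) : Set (Set Ω) :=
  {Λ | MeasurableSet[Minf Δ α h X P] Λ ∧
      ∀ t : ℝ≥0, Λ ∩ {ω | σ ω ≤ (t : ℝ≥0∞)} ∈ Mt Δ α h X P t}

/-- `M^μ_σ` for an `(M^μ_t)`-stopping time `σ`. -/
def Mmusigma (α : ℝ) (h : S → ℝ≥0∞) (X : ℝ≥0 → Ω → S)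
    (P : S → @Measure Ω (F0inf X)) (μ : Measure S) (σ : Ω → ℝ≥0∞) : Set (Set Ω) :=
  {Λ | MeasurableSet[Mmuinf Δ α h X P μ] Λ ∧
      ∀ t : ℝ≥0, Λ ∩ {ω | σ ω ≤ (t : ℝ≥0∞)} ∈ Mmu Δ α h X P μ t}

/-- `F^{h,μ}_T` for an `(F^{h,μ}_t)`-stopping time `T`. -/
def FhmuStop (X : ℝ≥0 → Ω → S) (P : S → @Measure Ω (F0inf X)) (μ : Measure S)
    (T : Ω → ℝ≥0∞) : Set (Set Ω) :=
  {Λ | ∀ t : ℝ≥0, Λ ∩ {ω | T ω ≤ (t : ℝ≥0∞)} ∈ Fhmu X P μ t}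

/-- `X_σ`, with the convention `X_∞ = Δ`. -/
def Xstop (X : ℝ≥0 → Ω → S) (σ : Ω → ℝ≥0∞) (ω : Ω) : S :=
  if σ ω < ∞ then X (σ ω).toNNReal ω else Δ

/-- The shift `θ_σ` at a random time `σ`. -/
def thetaStop (θ : ℝ≥0 → Ω → Ω) (σ : Ω → ℝ≥0∞) (ω : Ω) : Ω :=
  θ (σ ω).toNNReal ω

/-- `Q̄_{x,σ}[f ; σ < ζ] := h(x)·E^h_x[e^{ασ}·f/h(X_σ) ; σ < ζ]`, the σ-finite
distribution up to a stopping time `σ` applied to a nonnegative integrand `f`. -/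
def QbarStop (α : ℝ) (h : S → ℝ≥0∞) (X : ℝ≥0 → Ω → S)
    (P : S → @Measure Ω (F0inf X)) (x : S) (σ : Ω → ℝ≥0∞) (f : Ω → ℝ≥0∞) : ℝ≥0∞ :=
  h x * ∫⁻ ω in {ω | σ ω < lifetime Δ X ω},
      ENNReal.ofReal (Real.exp (α * (σ ω).toReal)) * f ω * (h (Xstop Δ X σ ω))⁻¹ ∂(P x)

/-- `Q̄_{x,σ}(Λ ; σ < ζ)` of a set `Λ`. -/
def QbarStopSet (α : ℝ) (h : S → ℝ≥0∞) (X : ℝ≥0 → Ω → S)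
    (P : S → @Measure Ω (F0inf X)) (x : S) (σ : Ω → ℝ≥0∞) (Λ : Set Ω) : ℝ≥0∞ :=
  QbarStop Δ α h X P x σ (Λ.indicator 1)

/-- The entrance time `D_B = inf {t ≥ 0 : X_t ∈ B}`. -/
def entranceTime (B : Set S) (X : ℝ≥0 → Ω → S) (ω : Ω) : ℝ≥0∞ :=
  ⨅ (t : ℝ≥0) (_ : X t ω ∈ B), (t : ℝ≥0∞)

/-- The hitting time `σ_B = inf {t > 0 : X_t ∈ B}`. -/
def hittingTime (B : Set S) (X : ℝ≥0 → Ω → S) (ω : Ω) : ℝ≥0∞ :=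
  ⨅ (t : ℝ≥0) (_ : 0 < t ∧ X t ω ∈ B), (t : ℝ≥0∞)

/-- A set is universally measurable (`∈ B(E_Δ)*`) if it lies in the completion of
`B(E_Δ)` with respect to every probability measure. -/
def UniversallyMeasurableSet (A : Set S) : Prop :=
  ∀ ν : Measure S, IsProbabilityMeasure ν → NullMeasurableSet A ν

/-- Iterated kernel integral
`∫ κ_{t₁-t₀}(x,dx₁) ∫ κ_{t₂-t₁}(x₁,dx₂) ⋯ f(x₁,…,xₙ)`, where `t₀` is the
starting time. -/
def iterK (κ : ℝ≥0 → S → Measure S) :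
    (n : ℕ) → (Fin (n + 1) → ℝ≥0) → ℝ≥0 → S → ((Fin (n + 1) → S) → ℝ≥0∞) → ℝ≥0∞
  | 0, t, t0, x, f => ∫⁻ y, f (fun _ => y) ∂(κ (t 0 - t0) x)
  | n + 1, t, t0, x, f =>
      ∫⁻ y, iterK κ n (fun i => t i.succ) (t 0) y (fun v => f (Fin.cons y v))
        ∂(κ (t 0 - t0) x)


/-- `γ = (σ + τ∘θ_σ)_ζ`, the time `σ + τ∘θ_σ` truncated to `∞` off `{σ + τ∘θ_σ < ζ}`. -/
def gammaTime (Δ : S) (X : ℝ≥0 → Ω → S) (θ : ℝ≥0 → Ω → Ω) (σ τ : Ω → ℝ≥0∞)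
    (ω : Ω) : ℝ≥0∞ :=
  if σ ω + τ (thetaStop θ σ ω) < lifetime Δ X ω then σ ω + τ (thetaStop θ σ ω)
  else ∞

end

/-! Pick witnesses `(Λ'_n, Γ_n)` of `Λ ∈ M^μ_{r_n}` along `r_n ↓ t`. Their limsups are
`F⁰_{t+}`-measurable and `Λ △ limsup Λ'_n ⊆ limsup Γ_n`. For each `T`, `Q̄_{μ,T}` is a measure
absolutely continuous with respect to `P_μ`, so it vanishes on `limsup Γ_n` (for `T > t` all but
finitely many `Γ_n` are `Q̄_{μ,T}`-null) and on every `P_μ`-null set. By the Markov property every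
`F⁰_{t+}`-set is `P_μ`-a.e. equal to an `F⁰_t`-set (Blumenthal), which turns the representative
`limsup Λ'_n` into an `F⁰_t`-set. Right continuity of `M_t = ⋂_μ M^μ_t` follows. -/

section Filtration

variable {S Ω : Type*} [MeasurableSpace S] {X : ℝ≥0 → Ω → S}

lemma F0_mono {s u : ℝ≥0} (h : s ≤ u) : F0 X s ≤ F0 X u :=
  biSup_mono fun _ hr => le_trans hr h

lemma F0_le_F0inf (t : ℝ≥0) : F0 X t ≤ F0inf X :=
  iSup₂_le fun s _ => le_iSup (fun u => MeasurableSpace.comap (X u) inferInstance) s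

lemma F0plus_mono {t s : ℝ≥0} (h : t ≤ s) : F0plus X t ≤ F0plus X s :=
  le_iInf₂ fun _ hu => biInf_le _ (lt_of_le_of_lt h hu)

lemma F0plus_le_F0 {t u : ℝ≥0} (h : t < u) : F0plus X t ≤ F0 X u :=
  biInf_le (fun s => F0 X s) h

lemma F0_le_F0plus (t : ℝ≥0) : F0 X t ≤ F0plus X t :=
  le_iInf₂ fun _ hu => F0_mono (le_of_lt hu)

lemma F0plus_le_F0inf (t : ℝ≥0) : F0plus X t ≤ F0inf X :=
  (F0plus_le_F0 (lt_add_one t)).trans (F0_le_F0inf (t + 1))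

lemma measurableSet_F0plus_iff {t : ℝ≥0} {A : Set Ω} :
    MeasurableSet[F0plus X t] A ↔ ∀ u, t < u → MeasurableSet[F0 X u] A := by
  rw [F0plus]
  simp only [MeasurableSpace.measurableSet_iInf, mem_Ioi]

lemma measurable_X_F0 {s t : ℝ≥0} (h : s ≤ t) : Measurable[F0 X t] (X s) :=
  measurable_iff_comap_le.2 <|
    le_iSup₂ (f := fun u (_ : u ∈ Iic t) => MeasurableSpace.comap (X u) inferInstance) s h

lemma measurable_X_F0inf (s : ℝ≥0) : Measurable[F0inf X] (X s) :=
  measurable_iff_comap_le.2 <| le_iSup (fun u => MeasurableSpace.comap (X u) inferInstance) s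

variable {θ : ℝ≥0 → Ω → Ω}

lemma measurable_shift (hshift : ∀ s t ω, X t (θ s ω) = X (t + s) ω) (t : ℝ≥0) :
    Measurable[F0inf X, F0inf X] (θ t) := by
  refine measurable_iff_comap_le.2 ?_
  rw [F0inf, MeasurableSpace.comap_iSup]
  refine iSup_le fun s => ?_
  rw [MeasurableSpace.comap_comp, show X s ∘ θ t = X (s + t) from funext (hshift t s)]
  exact le_iSup (fun u => MeasurableSpace.comap (X u) inferInstance) (s + t)

lemma F0inf_eq_generateFrom_inter_shift_preimage
    (hshift : ∀ s t ω, X t (θ s ω) = X (t + s) ω) (t : ℝ≥0) :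
    F0inf X = MeasurableSpace.generateFrom {C | ∃ A B, MeasurableSet[F0 X t] A ∧
      MeasurableSet[F0inf X] B ∧ C = A ∩ θ t ⁻¹' B} := by
  refine le_antisymm (iSup_le fun s => ?_) (MeasurableSpace.generateFrom_le ?_)
  · rw [← measurable_iff_comap_le]
    intro E hE
    refine MeasurableSpace.measurableSet_generateFrom ?_
    rcases le_or_gt s t with hst | hts
    · exact ⟨X s ⁻¹' E, univ, measurable_X_F0 hst hE, .univ, by simp⟩
    · refine ⟨univ, X (s - t) ⁻¹' E, .univ, measurable_X_F0inf (s - t) hE, ?_⟩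
      ext ω
      simp [hshift, tsub_add_cancel_of_le hts.le]
  · rintro _ ⟨A, B, hA, hB, rfl⟩
    exact (F0_le_F0inf t A hA).inter (measurable_shift hshift t hB)

lemma isPiSystem_inter_shift_preimage (t : ℝ≥0) :
    IsPiSystem {C | ∃ A B, MeasurableSet[F0 X t] A ∧
      MeasurableSet[F0inf X] B ∧ C = A ∩ θ t ⁻¹' B} := by
  rintro _ ⟨A₁, B₁, hA₁, hB₁, rfl⟩ _ ⟨A₂, B₂, hA₂, hB₂, rfl⟩ -
  exact ⟨A₁ ∩ A₂, B₁ ∩ B₂, hA₁.inter hA₂, hB₁.inter hB₂,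
    by rw [preimage_inter, inter_inter_inter_comm]⟩

end Filtration

section Lifetime

variable {S Ω : Type*} {X : ℝ≥0 → Ω → S} {Δ : S}

lemma lt_lifetime_iff_exists_ne (hX_absorb : ∀ ω s t, s ≤ t → X s ω = Δ → X t ω = Δ)
    {T : ℝ≥0} {r : ℕ → ℝ≥0} (hr : ∀ n, T < r n) (hr_lim : Tendsto r atTop (nhds T)) (ω : Ω) :
    (T : ℝ≥0∞) < lifetime Δ X ω ↔ ∃ n, X (r n) ω ≠ Δ := by
  constructor
  · intro hT
    obtain ⟨q, hTq, hq⟩ := ENNReal.lt_iff_exists_nnreal_btwn.1 hT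
    obtain ⟨n, hn⟩ := (hr_lim.eventually (gt_mem_nhds (ENNReal.coe_lt_coe.1 hTq))).exists
    refine ⟨n, fun hΔ => ?_⟩
    have hζ : lifetime Δ X ω ≤ r n := iInf₂_le (r n) hΔ
    exact (hq.trans_le hζ).not_ge (ENNReal.coe_le_coe.2 hn.le)
  · rintro ⟨n, hn⟩
    refine (ENNReal.coe_lt_coe.2 (hr n)).trans_le (le_iInf₂ fun s hs => ?_)
    by_contra! hsn
    exact hn (hX_absorb ω s (r n) (ENNReal.coe_le_coe.1 hsn.le) hs)

lemma measurableSet_lt_lifetime [MeasurableSpace S] [MeasurableSingletonClass S]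
    (hX_absorb : ∀ ω s t, s ≤ t → X s ω = Δ → X t ω = Δ) (T : ℝ≥0) :
    MeasurableSet[F0inf X] {ω | (T : ℝ≥0∞) < lifetime Δ X ω} := by
  obtain ⟨r, -, hr, hr_lim⟩ := exists_seq_strictAnti_tendsto T
  simp_rw [lt_lifetime_iff_exists_ne hX_absorb hr hr_lim, ofPred_exists]
  exact .iUnion fun n => (measurable_X_F0inf (r n) (measurableSet_singleton Δ)).compl

end Lifetime

lemma MeasureTheory.Measure.bind_absolutelyContinuous_bind {α β : Type*} [MeasurableSpace α]
    [MeasurableSpace β] {μ : Measure α} {κ η : α → Measure β} (hκ : Measurable κ)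
    (hη : Measurable η) (hκη : ∀ a, κ a ≪ η a) : μ.bind κ ≪ μ.bind η := by
  refine Measure.AbsolutelyContinuous.mk fun s hs hs0 => ?_
  have hηs : Measurable fun a => η a s := (Measure.measurable_coe hs).comp hη
  have hκs : Measurable fun a => κ a s := (Measure.measurable_coe hs).comp hκ
  rw [Measure.bind_apply hs hη.aemeasurable, lintegral_eq_zero_iff hηs] at hs0
  rw [Measure.bind_apply hs hκ.aemeasurable, lintegral_eq_zero_iff hκs]
  filter_upwards [hs0] with a ha using hκη a ha

section HTransform

variable {S Ω : Type*} [MeasurableSpace S] {X : ℝ≥0 → Ω → S} {P : S → Measure[F0inf X] Ω}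

/-- `Q̄_{μ,T}` is the measure `∫ μ(dx) h(x) e^{αT} h(X_T)⁻¹ 1_{T < ζ} P_x`. -/
lemma exists_measure_eq_Qmu [MeasurableSingletonClass S] {Δ : S} {α : ℝ} {h : S → ℝ≥0∞}
    (h_meas : Measurable h) (hX_absorb : ∀ ω s t, s ≤ t → X s ω = Δ → X t ω = Δ)
    (hP_prob : ∀ x, IsProbabilityMeasure (P x)) (hP : Measurable P) (μ : Measure S) (T : ℝ≥0) :
    ∃ ν : Measure[F0inf X] Ω, ν ≪ μ.bind P ∧
      ∀ Γ, MeasurableSet[F0inf X] Γ → Qmu Δ α h X P μ T Γ = ν Γ := by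
  let _ : MeasurableSpace Ω := F0inf X
  set Z := {ω | (T : ℝ≥0∞) < lifetime Δ X ω}
  set c := ENNReal.ofReal (Real.exp (α * T))
  let κ : ProbabilityTheory.Kernel S Ω := ⟨P, hP⟩
  have : ProbabilityTheory.IsMarkovKernel κ := ⟨hP_prob⟩
  let f : S → Ω → ℝ≥0∞ := fun x ω => h x * Z.indicator (fun ω => c * (h (X T ω))⁻¹) ω
  have hf : Measurable (Function.uncurry f) :=
    (h_meas.comp measurable_fst).mul <| (measurable_const.mul
      (h_meas.comp (measurable_X_F0inf T)).inv).indicator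
      (measurableSet_lt_lifetime hX_absorb T) |>.comp measurable_snd
  refine ⟨μ.bind (κ.withDensity f),
    Measure.bind_absolutelyContinuous_bind (κ.withDensity f).measurable κ.measurable
      (ProbabilityTheory.Kernel.withDensity_absolutelyContinuous f), fun Γ hΓ => ?_⟩
  rw [Qmu, Measure.bind_apply hΓ (κ.withDensity f).measurable.aemeasurable]
  refine lintegral_congr fun x => ?_
  rw [ProbabilityTheory.Kernel.withDensity_apply' κ hf, QbarSet, Qbar]
  have hZ : MeasurableSet Z := measurableSet_lt_lifetime hX_absorb T
  have hg : Measurable (Z.indicator fun ω => c * Γ.indicator 1 ω * (h (X T ω))⁻¹) :=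
    ((measurable_const.mul (measurable_one.indicator hΓ)).mul
      (h_meas.comp (measurable_X_F0inf T)).inv).indicator hZ
  rw [← lintegral_indicator hZ, ← lintegral_indicator hΓ, ← lintegral_const_mul _ hg]
  refine lintegral_congr fun ω => ?_
  by_cases hωΓ : ω ∈ Γ <;> by_cases hωZ : ω ∈ Z <;> simp [f, hωΓ, hωZ, mul_assoc]

end HTransform

lemma MeasureTheory.withDensity_condLExp_trim {Ω : Type*} {m m₀ : MeasurableSpace Ω}
    (hm : m ≤ m₀) (P : Measure[m₀] Ω) [SigmaFinite (P.trim hm)] (f : Ω → ℝ≥0∞) :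
    (P.withDensity P⁻[f|m]).trim hm = (P.withDensity f).trim hm := by
  refine @Measure.ext _ m _ _ fun s hs => ?_
  rw [trim_measurableSet_eq hm hs, trim_measurableSet_eq hm hs, withDensity_apply _ (hm s hs),
    withDensity_apply _ (hm s hs), setLIntegral_condLExp hm P f hs]

section Markov

variable {S Ω : Type*} [MeasurableSpace S] {X : ℝ≥0 → Ω → S} {θ : ℝ≥0 → Ω → Ω}
  {P : S → Measure[F0inf X] Ω}

/-- The Markov property `E_x[Y ∘ θ_s | F⁰_{s+}] = E_{X_s}[Y]`, tested on `F⁰_{s+}`-sets. -/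
def HasMarkovProperty (X : ℝ≥0 → Ω → S) (θ : ℝ≥0 → Ω → Ω) (P : S → Measure[F0inf X] Ω) : Prop :=
  ∀ (s : ℝ≥0) (x : S) (Y : Ω → ℝ≥0∞), Measurable[F0inf X] Y →
    ∀ Λ : Set Ω, MeasurableSet[F0plus X s] Λ →
      ∫⁻ ω in Λ, Y (θ s ω) ∂(P x) = ∫⁻ ω in Λ, (∫⁻ ω', Y ω' ∂(P (X s ω))) ∂(P x)

lemma setLIntegral_comp_shift_bind
    (hP : Measurable P) (hshift : ∀ s t ω, X t (θ s ω) = X (t + s) ω)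
    (hMarkov : HasMarkovProperty X θ P) (μ : Measure S) (t : ℝ≥0) {Y : Ω → ℝ≥0∞}
    (hY : Measurable[F0inf X] Y) {Λ : Set Ω}
    (hΛ : MeasurableSet[F0plus X t] Λ) :
    ∫⁻ ω in Λ, Y (θ t ω) ∂(μ.bind P) = ∫⁻ ω in Λ, ∫⁻ ω', Y ω' ∂(P (X t ω)) ∂(μ.bind P) := by
  let _ : MeasurableSpace Ω := F0inf X
  have hΛ' : MeasurableSet Λ := F0plus_le_F0inf t Λ hΛ
  have hYθ : Measurable fun ω => Y (θ t ω) := hY.comp (measurable_shift hshift t)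
  have hEY : Measurable fun ω => ∫⁻ ω', Y ω' ∂(P (X t ω)) :=
    (Measure.measurable_lintegral hY).comp (hP.comp (measurable_X_F0inf t))
  rw [← lintegral_indicator hΛ', ← lintegral_indicator hΛ',
    Measure.lintegral_bind hP.aemeasurable (hYθ.indicator hΛ').aemeasurable,
    Measure.lintegral_bind hP.aemeasurable (hEY.indicator hΛ').aemeasurable]
  refine lintegral_congr fun x => ?_
  rw [lintegral_indicator hΛ', lintegral_indicator hΛ', hMarkov t x Y hY Λ hΛ]

lemma lintegral_mul_comp_shift_bind
    (hP : Measurable P) (hshift : ∀ s t ω, X t (θ s ω) = X (t + s) ω)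
    (hMarkov : HasMarkovProperty X θ P) (μ : Measure S) (t : ℝ≥0) {Y : Ω → ℝ≥0∞}
    (hY : Measurable[F0inf X] Y) {W : Ω → ℝ≥0∞}
    (hW : Measurable[F0plus X t] W) :
    ∫⁻ ω, Y (θ t ω) * W ω ∂(μ.bind P) = ∫⁻ ω, (∫⁻ ω', Y ω' ∂(P (X t ω))) * W ω ∂(μ.bind P) := by
  let _ : MeasurableSpace Ω := F0inf X
  have hle := F0plus_le_F0inf (X := X) t
  have hYθ : Measurable fun ω => Y (θ t ω) := hY.comp (measurable_shift hshift t)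
  have hEY : Measurable fun ω => ∫⁻ ω', Y ω' ∂(P (X t ω)) :=
    (Measure.measurable_lintegral hY).comp (hP.comp (measurable_X_F0inf t))
  have htrim : ((μ.bind P).withDensity fun ω => Y (θ t ω)).trim hle
      = ((μ.bind P).withDensity fun ω => ∫⁻ ω', Y ω' ∂(P (X t ω))).trim hle := by
    refine @Measure.ext _ (F0plus X t) _ _ fun A hA => ?_
    rw [trim_measurableSet_eq hle hA, trim_measurableSet_eq hle hA,
      withDensity_apply _ (hle A hA), withDensity_apply _ (hle A hA)]
    exact setLIntegral_comp_shift_bind hP hshift hMarkov μ t hY hA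
  calc ∫⁻ ω, Y (θ t ω) * W ω ∂(μ.bind P)
      = ∫⁻ ω, W ω ∂((μ.bind P).withDensity fun ω => Y (θ t ω)) :=
        (lintegral_withDensity_eq_lintegral_mul _ hYθ (hW.mono hle le_rfl)).symm
    _ = ∫⁻ ω, W ω ∂((μ.bind P).withDensity fun ω => ∫⁻ ω', Y ω' ∂(P (X t ω))) := by
        rw [← lintegral_trim hle hW, htrim, lintegral_trim hle hW]
    _ = _ := lintegral_withDensity_eq_lintegral_mul _ hEY (hW.mono hle le_rfl)

lemma withDensity_inter_shift_preimage_bind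
    (hP : Measurable P) (hshift : ∀ s t ω, X t (θ s ω) = X (t + s) ω)
    (hMarkov : HasMarkovProperty X θ P) (μ : Measure S) (t : ℝ≥0) {W : Ω → ℝ≥0∞}
    (hW : Measurable[F0plus X t] W) {A B : Set Ω}
    (hA : MeasurableSet[F0plus X t] A) (hB : MeasurableSet[F0inf X] B) :
    (μ.bind P).withDensity W (A ∩ θ t ⁻¹' B)
      = ∫⁻ ω in A, P (X t ω) B ∂(μ.bind P).withDensity W := by
  let _ : MeasurableSpace Ω := F0inf X
  have hle := F0plus_le_F0inf (X := X) t
  have hPB : Measurable fun ω => P (X t ω) B :=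
    ((Measure.measurable_coe hB).comp hP).comp (measurable_X_F0inf t)
  rw [withDensity_apply _ ((hle A hA).inter (measurable_shift hshift t hB)),
    setLIntegral_withDensity_eq_setLIntegral_mul _ (hW.mono hle le_rfl) hPB (hle A hA),
    ← lintegral_indicator ((hle A hA).inter (measurable_shift hshift t hB)),
    ← lintegral_indicator (hle A hA)]
  have key := lintegral_mul_comp_shift_bind hP hshift hMarkov μ t
    (measurable_one.indicator hB) (hW.indicator hA)
  simp only [lintegral_indicator_one hB] at key
  convert key using 1 <;> refine lintegral_congr fun ω => ?_
  · by_cases hωA : ω ∈ A <;> by_cases hωB : θ t ω ∈ B <;> simp [hωA, hωB]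
  · by_cases hωA : ω ∈ A <;> simp [hωA, mul_comm]

end Markov

section Blumenthal

variable {S Ω : Type*} [MeasurableSpace S] {X : ℝ≥0 → Ω → S} {θ : ℝ≥0 → Ω → Ω}
  {P : S → Measure[F0inf X] Ω}

/-- Blumenthal: `P_μ⁻[1_Λ | F⁰_t]` and `1_Λ` are densities of the same measure, since by the
Markov property both give `∫_A P_{X_t}(B)` on the cylinders `A ∩ θ_t⁻¹ B`. -/
lemma exists_measurableSet_F0_ae_eq (hP_prob : ∀ x, IsProbabilityMeasure (P x))
    (hP : Measurable P) (hshift : ∀ s t ω, X t (θ s ω) = X (t + s) ω)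
    (hMarkov : HasMarkovProperty X θ P) (μ : Measure S) [IsFiniteMeasure μ] (t : ℝ≥0)
    {Λ : Set Ω} (hΛ : MeasurableSet[F0plus X t] Λ) :
    ∃ Λ', MeasurableSet[F0 X t] Λ' ∧ Λ =ᵐ[μ.bind P] Λ' := by
  let _ : MeasurableSpace Ω := F0inf X
  have hm := F0_le_F0inf (X := X) t
  have hmp := F0_le_F0plus (X := X) t
  have hΛ' : MeasurableSet Λ := F0plus_le_F0inf t Λ hΛ
  have : IsFiniteMeasure (μ.bind P) := ⟨by
    rw [Measure.bind_apply .univ hP.aemeasurable]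
    simp [measure_lt_top]⟩
  have h1 : Measurable[F0plus X t] (Λ.indicator (1 : Ω → ℝ≥0∞)) :=
    measurable_const.indicator hΛ
  set Ψ := (μ.bind P)⁻[Λ.indicator 1|F0 X t]
  have hΨ : Measurable[F0 X t] Ψ := measurable_condLExp _ _ _
  have hcyl : ∀ A B, MeasurableSet[F0 X t] A → MeasurableSet B →
      (μ.bind P).withDensity (Λ.indicator 1) (A ∩ θ t ⁻¹' B)
        = (μ.bind P).withDensity Ψ (A ∩ θ t ⁻¹' B) := by
    intro A B hA hB
    have hPB : Measurable[F0 X t] fun ω => P (X t ω) B :=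
      ((Measure.measurable_coe hB).comp hP).comp (measurable_X_F0 le_rfl)
    rw [withDensity_inter_shift_preimage_bind hP hshift hMarkov μ t h1 (hmp A hA) hB,
      withDensity_inter_shift_preimage_bind hP hshift hMarkov μ t
        (hΨ.mono hmp le_rfl) (hmp A hA) hB,
      ← setLIntegral_trim hm hPB hA, ← setLIntegral_trim hm hPB hA,
      withDensity_condLExp_trim]
  have : IsFiniteMeasure ((μ.bind P).withDensity (Λ.indicator 1)) :=
    isFiniteMeasure_withDensity (by simp [lintegral_indicator_one hΛ', measure_ne_top])
  have heq : (μ.bind P).withDensity (Λ.indicator 1) = (μ.bind P).withDensity Ψ :=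
    ext_of_generate_finite _ (F0inf_eq_generateFrom_inter_shift_preimage hshift t)
      (isPiSystem_inter_shift_preimage t) (by rintro _ ⟨A, B, hA, hB, rfl⟩; exact hcyl A B hA hB)
      (by simpa using hcyl univ univ .univ .univ)
  have hae : Λ.indicator 1 =ᵐ[μ.bind P] Ψ :=
    (withDensity_eq_iff (h1.mono (F0plus_le_F0inf t) le_rfl).aemeasurable
      (hΨ.mono hm le_rfl).aemeasurable
      (by simp [lintegral_indicator_one hΛ', measure_ne_top])).1 heq
  refine ⟨Ψ ⁻¹' {1}, hΨ (measurableSet_singleton 1), ?_⟩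
  have hΛ_eq : Λ.indicator (1 : Ω → ℝ≥0∞) ⁻¹' {1} = Λ := by
    ext ω
    by_cases hω : ω ∈ Λ <;> simp [hω]
  simpa only [hΛ_eq] using hae.preimage {1}

end Blumenthal

lemma symmDiff_limsup_subset_limsup {α : Type*} {Λ : Set α} {A Γ : ℕ → Set α}
    (h : ∀ n, symmDiff Λ (A n) ⊆ Γ n) : symmDiff Λ (limsup A atTop) ⊆ limsup Γ atTop := by
  intro ω hω
  rw [mem_limsup_iff_frequently_mem]
  rcases hω with ⟨hωΛ, hωA⟩ | ⟨hωA, hωΛ⟩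
  · rw [mem_limsup_iff_frequently_mem, not_frequently] at hωA
    exact (hωA.mono fun n hn => h n (Or.inl ⟨hωΛ, hn⟩)).frequently
  · rw [mem_limsup_iff_frequently_mem] at hωA
    exact hωA.mono fun n hn => h n (Or.inr ⟨hn, hωΛ⟩)

section RightContinuity

variable {S Ω : Type*} [MeasurableSpace S] {X : ℝ≥0 → Ω → S} {θ : ℝ≥0 → Ω → Ω}
  {P : S → Measure[F0inf X] Ω} {Δ : S} {α : ℝ} {h : S → ℝ≥0∞}

lemma measurableSet_F0plus_limsup {t : ℝ≥0} {A : ℕ → Set Ω}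
    (hA : ∀ u, t < u → ∀ᶠ n in atTop, MeasurableSet[F0 X u] (A n)) :
    MeasurableSet[F0plus X t] (limsup A atTop) := by
  refine measurableSet_F0plus_iff.2 fun u hu => ?_
  obtain ⟨N, hN⟩ := eventually_atTop.1 (hA u hu)
  rw [← limsup_nat_add A N]
  exact @MeasurableSet.measurableSet_limsup _ (F0 X u) _ fun n => hN _ (Nat.le_add_left N n)

lemma Qmu_limsup_eq_zero [MeasurableSingletonClass S] (h_meas : Measurable h)
    (hX_absorb : ∀ ω s t, s ≤ t → X s ω = Δ → X t ω = Δ)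
    (hP_prob : ∀ x, IsProbabilityMeasure (P x)) (hP : Measurable P) (μ : Measure S) (T : ℝ≥0)
    {Γ : ℕ → Set Ω} (hΓ : ∀ n, MeasurableSet[F0inf X] (Γ n))
    (hΓ0 : ∀ᶠ n in atTop, Qmu Δ α h X P μ T (Γ n) = 0) :
    Qmu Δ α h X P μ T (limsup Γ atTop) = 0 := by
  obtain ⟨ν, -, hν⟩ := exists_measure_eq_Qmu (α := α) h_meas hX_absorb hP_prob hP μ T
  obtain ⟨N, hN⟩ := eventually_atTop.1 hΓ0
  have hνΓ : ∀ n, ν (Γ (n + N)) = 0 := fun n =>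
    (hν _ (hΓ _)).symm.trans (hN _ (Nat.le_add_left N n))
  rw [hν _ (@MeasurableSet.measurableSet_limsup _ (F0inf X) _ hΓ), ← limsup_nat_add Γ N]
  exact measure_limsup_atTop_eq_zero (by simp [hνΓ])

lemma Qmu_union_eq_zero [MeasurableSingletonClass S] (h_meas : Measurable h)
    (hX_absorb : ∀ ω s t, s ≤ t → X s ω = Δ → X t ω = Δ)
    (hP_prob : ∀ x, IsProbabilityMeasure (P x)) (hP : Measurable P) (μ : Measure S) (T : ℝ≥0)
    {Γ A : Set Ω} (hΓ : MeasurableSet[F0inf X] Γ) (hA : MeasurableSet[F0inf X] A)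
    (hΓ0 : Qmu Δ α h X P μ T Γ = 0) (hA0 : μ.bind P A = 0) :
    Qmu Δ α h X P μ T (Γ ∪ A) = 0 := by
  obtain ⟨ν, hνP, hν⟩ := exists_measure_eq_Qmu (α := α) h_meas hX_absorb hP_prob hP μ T
  rw [hν _ (hΓ.union hA)]
  exact measure_union_null ((hν _ hΓ).symm.trans hΓ0) (hνP hA0)

lemma Mmu_mono (μ : Measure S) {t s : ℝ≥0} (hts : t ≤ s) :
    Mmu Δ α h X P μ t ⊆ Mmu Δ α h X P μ s := by
  rintro Λ ⟨Λ', Γ, hΛ', hΓ, hsub, hΓ0⟩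
  exact ⟨Λ', Γ, F0_mono hts _ hΛ', F0plus_mono hts _ hΓ, hsub,
    fun T hT => hΓ0 T (hts.trans_lt hT)⟩

lemma mem_Mmu_of_forall_lt [MeasurableSingletonClass S] (h_meas : Measurable h)
    (hX_absorb : ∀ ω s t, s ≤ t → X s ω = Δ → X t ω = Δ)
    (hshift : ∀ s t ω, X t (θ s ω) = X (t + s) ω) (hP_prob : ∀ x, IsProbabilityMeasure (P x))
    (hP : Measurable P) (hMarkov : HasMarkovProperty X θ P) (μ : Measure S) [IsFiniteMeasure μ]
    {t : ℝ≥0} {Λ : Set Ω} (hΛ : ∀ s, t < s → Λ ∈ Mmu Δ α h X P μ s) :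
    Λ ∈ Mmu Δ α h X P μ t := by
  obtain ⟨r, -, hr, hr_lim⟩ := exists_seq_strictAnti_tendsto t
  choose Λ' Γ hΛ' hΓ hsub hΓ0 using fun n => hΛ (r n) (hr n)
  have hr_lt : ∀ u, t < u → ∀ᶠ n in atTop, r n < u := fun u hu =>
    hr_lim.eventually (gt_mem_nhds hu)
  have hΛ₀ : MeasurableSet[F0plus X t] (limsup Λ' atTop) := measurableSet_F0plus_limsup
    fun u hu => (hr_lt u hu).mono fun n hn => F0_mono hn.le _ (hΛ' n)
  have hΓ₀ : MeasurableSet[F0plus X t] (limsup Γ atTop) := measurableSet_F0plus_limsup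
    fun u hu => (hr_lt u hu).mono fun n hn => F0plus_le_F0 hn _ (hΓ n)
  obtain ⟨Λf, hΛf, hae⟩ := exists_measurableSet_F0_ae_eq hP_prob hP hshift hMarkov μ t hΛ₀
  have hΔ : MeasurableSet[F0plus X t] (symmDiff (limsup Λ' atTop) Λf) :=
    hΛ₀.symmDiff (F0_le_F0plus t _ hΛf)
  refine ⟨Λf, limsup Γ atTop ∪ symmDiff (limsup Λ' atTop) Λf, hΛf, hΓ₀.union hΔ,
    (symmDiff_triangle _ _ _).trans
      (union_subset_union (symmDiff_limsup_subset_limsup hsub) subset_rfl),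
    fun T hT => ?_⟩
  refine Qmu_union_eq_zero h_meas hX_absorb hP_prob hP μ T (F0plus_le_F0inf t _ hΓ₀)
    (F0plus_le_F0inf t _ hΔ) ?_ (measure_symmDiff_eq_zero_iff.2 hae)
  exact Qmu_limsup_eq_zero h_meas hX_absorb hP_prob hP μ T
    (fun n => F0plus_le_F0inf _ _ (hΓ n)) ((hr_lt T hT).mono fun n hn => hΓ0 n T hn)

end RightContinuity

theorem filtration_M_right_continuous_general
    {S : Type*} [MeasurableSpace S]
    [StandardBorelSpace S] {Ω : Type*} (Δ : S)
    (X : ℝ≥0 → Ω → S) (θ : ℝ≥0 → Ω → Ω) (P : S → @Measure Ω (F0inf X))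
    (h : S → ℝ≥0∞) (α : ℝ)
    (h_meas : Measurable h)
    (hX_absorb : ∀ (ω : Ω) (s t : ℝ≥0), s ≤ t → X s ω = Δ → X t ω = Δ)
    (hshift : ∀ (s t : ℝ≥0) (ω : Ω), X t (θ s ω) = X (t + s) ω)
    (hP_prob : ∀ x : S, IsProbabilityMeasure (P x))
    (hP_meas : ∀ Λ : Set Ω, MeasurableSet[F0inf X] Λ → Measurable fun x => P x Λ)
    (hMarkov : ∀ (s : ℝ≥0) (x : S) (Y : Ω → ℝ≥0∞), Measurable[F0inf X] Y →
      ∀ Λ : Set Ω, MeasurableSet[F0plus X s] Λ →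
        ∫⁻ ω in Λ, Y (θ s ω) ∂(P x)
          = ∫⁻ ω in Λ, (∫⁻ ω', Y ω' ∂(P (X s ω))) ∂(P x))
    :
    (∀ (μ : Measure S), IsProbabilityMeasure μ → ∀ t : ℝ≥0,
      Mmu Δ α h X P μ t
        = {Λ : Set Ω | ∀ s : ℝ≥0, t < s → Λ ∈ Mmu Δ α h X P μ s}) ∧
    (∀ t : ℝ≥0,
      Mt Δ α h X P t = {Λ : Set Ω | ∀ s : ℝ≥0, t < s → Λ ∈ Mt Δ α h X P s}) := by
  have hP : Measurable P := Measure.measurable_of_measurable_coe _ hP_meas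
  have hM : ∀ μ : Measure S, IsProbabilityMeasure μ → ∀ {t} {Λ : Set Ω},
      (∀ s, t < s → Λ ∈ Mmu Δ α h X P μ s) → Λ ∈ Mmu Δ α h X P μ t := fun μ _ _ _ =>
    mem_Mmu_of_forall_lt h_meas hX_absorb hshift hP_prob hP hMarkov μ
  refine ⟨fun μ hμ t => ?_, fun t => ?_⟩
  · exact Subset.antisymm (fun Λ hΛ s hs => Mmu_mono μ hs.le hΛ) fun Λ => hM μ hμ
  · exact Subset.antisymm (fun Λ hΛ s hs μ hμ => Mmu_mono μ hs.le (hΛ μ hμ))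
      fun Λ hΛ μ hμ => hM μ hμ fun s hs => hΛ s hs μ hμ

theorem filtration_M_right_continuous
    {S : Type*} [MeasurableSpace S] [TopologicalSpace S] [BorelSpace S]
    [StandardBorelSpace S] {Ω : Type*} (Δ : S)
    (X : ℝ≥0 → Ω → S) (θ : ℝ≥0 → Ω → Ω) (P : S → @Measure Ω (F0inf X))
    (h : S → ℝ≥0∞) (α : ℝ) (hα : 0 < α)
    (h_meas : Measurable h) (h_cem : h Δ = 0)
    (h_pos : ∀ x : S, x ≠ Δ → 0 < h x ∧ h x < ∞)
    (hX_rc : ∀ (ω : Ω) (t : ℝ≥0),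
      Filter.Tendsto (fun s => X s ω) (nhdsWithin t (Set.Ioi t)) (nhds (X t ω)))
    (hX_absorb : ∀ (ω : Ω) (s t : ℝ≥0), s ≤ t → X s ω = Δ → X t ω = Δ)
    (hshift : ∀ (s t : ℝ≥0) (ω : Ω), X t (θ s ω) = X (t + s) ω)
    (hP_prob : ∀ x : S, IsProbabilityMeasure (P x))
    (hP_meas : ∀ Λ : Set Ω, MeasurableSet[F0inf X] Λ → Measurable fun x => P x Λ)
    (hP_start : ∀ x : S, P x {ω | X 0 ω = x} = 1)
    (hMarkov : ∀ (s : ℝ≥0) (x : S) (Y : Ω → ℝ≥0∞), Measurable[F0inf X] Y →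
      ∀ Λ : Set Ω, MeasurableSet[F0plus X s] Λ →
        ∫⁻ ω in Λ, Y (θ s ω) ∂(P x)
          = ∫⁻ ω in Λ, (∫⁻ ω', Y ω' ∂(P (X s ω))) ∂(P x))
    :
    (∀ (μ : Measure S), IsProbabilityMeasure μ → ∀ t : ℝ≥0,
      Mmu Δ α h X P μ t
        = {Λ : Set Ω | ∀ s : ℝ≥0, t < s → Λ ∈ Mmu Δ α h X P μ s}) ∧
    (∀ t : ℝ≥0,
      Mt Δ α h X P t = {Λ : Set Ω | ∀ s : ℝ≥0, t < s → Λ ∈ Mt Δ α h X P s}) :=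
  filtration_M_right_continuous_general Δ X θ P h α h_meas hX_absorb hshift hP_prob hP_meas hMarkov
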